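/- arXiv:2307.13325 — 2 statements merged into one kernel-verified Lean document; each statement's English description precedes it below -/
import Mathlib

section
/- Let S = {x, y} and for each integer i ≥ 14 let r_i = ∏_{j=0}^{2i} x y^{i²+j}, and let R = {r_i : i ≥ 14}. Then for every i ≥ 14: |r_i| ≥ i³, and every piece (with respect to R) that is a subword of some word in the set of cyclic shifts of r_i and r_i⁻¹ has length strictly less than 2(i+1)². (Indeed every such piece has one of the forms y^k, y^{-k}, y^k x y^{k'}, or y^{-k} x⁻¹ y^{-k'} with 0 ≤ k, k' ≤ (i+1)² − 1.) -/
namespace SmallCancel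

/-- A word over `S`: a finite sequence of letters from the symmetrized alphabet
`S ∪ S⁻¹`, encoded as pairs `(s, b)` where `b = true` denotes the letter `s`
and `b = false` denotes its formal inverse `s⁻¹`. -/
abbrev Word (S : Type) := List (S × Bool)

/-- The formal inverse of a word. -/
def wInv {S : Type} (w : Word S) : Word S := (w.map fun a => (a.1, !a.2)).reverse

/-- A word is reduced if no letter is immediately followed by its inverse. -/
def Reduced {S : Type} (w : Word S) : Prop := w.Chain' fun a b => b ≠ (a.1, !a.2)

/-- A word is cyclically reduced if all of its cyclic shifts are reduced. -/
def CyclicallyReduced {S : Type} (w : Word S) : Prop := ∀ n, Reduced (w.rotate n)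

/-- `R̄`: the set of all cyclic shifts of elements of `R` and of their inverses. -/
def cyclicClosure {S : Type} (R : Set (Word S)) : Set (Word S) :=
  {w | ∃ r ∈ R, ∃ n, w = r.rotate n ∨ w = (wInv r).rotate n}

/-- `p` is a piece with respect to `R` if it is a prefix of two distinct elements
of `R̄`. -/
def IsPiece {S : Type} (R : Set (Word S)) (p : Word S) : Prop :=
  ∃ r₁ ∈ cyclicClosure R, ∃ r₂ ∈ cyclicClosure R, r₁ ≠ r₂ ∧ p <+: r₁ ∧ p <+: r₂

/-- The `C'(λ)` small-cancellation condition: every piece `p` that is a subword of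
some `r ∈ R̄` satisfies `|p| < λ|r|`. -/
def SmallCancellation {S : Type} (R : Set (Word S)) (lam : ℝ) : Prop :=
  ∀ p, IsPiece R p → ∀ r ∈ cyclicClosure R, p <:+: r →
    (p.length : ℝ) < lam * r.length

/-- The element of the presented group `⟨S | R⟩` represented by a word `w`. -/
def toPresented {S : Type} (R : Set (Word S)) (w : Word S) :
    PresentedGroup {g : FreeGroup S | ∃ r ∈ R, g = FreeGroup.mk r} :=
  QuotientGroup.mk (FreeGroup.mk w)

/-- A word `w` is geodesic if every word representing the same element of the
presented group `⟨S | R⟩` is at least as long as `w`. -/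
def IsGeodesicWord {S : Type} (R : Set (Word S)) (w : Word S) : Prop :=
  ∀ v : Word S, toPresented R v = toPresented R w → w.length ≤ v.length

/-- The finite prefix of length `n` of an infinite word `γ`. -/
def rayPrefix {S : Type} (γ : ℕ → S × Bool) (n : ℕ) : Word S := (List.range n).map γ

/-- A geodesic ray: an infinite word all of whose finite prefixes are geodesic. -/
def IsGeodesicRay {S : Type} (R : Set (Word S)) (γ : ℕ → S × Bool) : Prop :=
  ∀ n, IsGeodesicWord R (rayPrefix γ n)

/-- The intersection function of a ray `γ`:
`ρ_γ(t) = max{|w| : w is a subword of some r ∈ R̄ with |r| ≤ t and a subword of γ}`. -/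
noncomputable def intersectionFn {S : Type} (R : Set (Word S)) (γ : ℕ → S × Bool)
    (t : ℕ) : ℕ :=
  sSup {n | ∃ w : Word S, (∃ r ∈ cyclicClosure R, r.length ≤ t ∧ w <:+: r) ∧
    (∃ m, w <:+: rayPrefix γ m) ∧ w.length = n}

/-- A function is sublinear if `ρ(n)/n → 0`. -/
def Sublinear (ρ : ℕ → ℝ) : Prop :=
  Filter.Tendsto (fun n => ρ n / n) Filter.atTop (nhds 0)

/-- A weakly increasing function `f : ℕ → ℝ` is viable if `f(n) ≥ 6` for all `n`
and `f(n) → ∞`. -/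
def Viable (f : ℕ → ℝ) : Prop :=
  Monotone f ∧ (∀ n, 6 ≤ f n) ∧ Filter.Tendsto f Filter.atTop Filter.atTop

/-- The `C'(1/f)` small-cancellation condition for a set of relators: every piece `p`
that is a subword of some `r ∈ R̄` satisfies `|p| < |r|/f(|r|)`. -/
def CPrimeOverF {S : Type} (R : Set (Word S)) (f : ℕ → ℝ) : Prop :=
  ∀ p, IsPiece R p → ∀ r ∈ cyclicClosure R, p <:+: r →
    (p.length : ℝ) < (r.length : ℝ) / f r.length

/-- The pair `(x, R)` satisfies the `C'(1/f)` condition: every word `p` that is a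
subword both of `x` and of some `r ∈ R̄` satisfies `|p| < |r|/f(|r|)`. -/
def PairCPrimeOverF {S : Type} (x : Word S) (R : Set (Word S)) (f : ℕ → ℝ) : Prop :=
  ∀ p, p <:+: x → ∀ r ∈ cyclicClosure R, p <:+: r →
    (p.length : ℝ) < (r.length : ℝ) / f r.length

/-- The increasing partial small-cancellation condition (IPSC). -/
def IPSC {S : Type} (R : Set (Word S)) : Prop :=
  ∀ n : ℕ → ℕ, (∀ i, 0 < n i) → ∃ f : ℕ → ℝ, Viable f ∧
    ∀ K : ℕ, ∃ i, K ≤ i ∧ ∃ x y : Word S, x ++ y ∈ cyclicClosure R ∧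
      n i ≤ (x ++ y).length ∧ ((x ++ y).length : ℝ) / i ≤ x.length ∧
      PairCPrimeOverF x R f

end SmallCancel

namespace SmallCancel

/-- The alphabet `S = {x, y}`, encoded as `Bool` with `x = false` and `y = true`. -/
abbrev XY := Bool

/-- The letter `x`. -/
def xLetter : Word XY := [(false, true)]

/-- The word `y^k`. -/
def yPow (k : ℕ) : Word XY := List.replicate k (true, true)

/-- The relator `r_i = ∏_{j=0}^{2i} x y^{i²+j}`. -/
def rEx (i : ℕ) : Word XY :=
  ((List.range (2 * i + 1)).map fun j => xLetter ++ yPow (i ^ 2 + j)).flatten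

/-- The set of relators `R = {r_i : i ≥ 14}`. -/
def REx : Set (Word XY) := {w | ∃ i, 14 ≤ i ∧ w = rEx i}

end SmallCancel

open SmallCancel

/-!
Pieces are closed under taking subwords and formal inverses, so it suffices to see that no word
`x y^e x` is a piece and that every subword of length `≥ 2(i+1)²` of a cyclic shift of `r_i`
contains such a word. The first holds because the exponents `j², …, j² + 2j` of `r_j` lie in
`[j², (j+1)²)`, so `e` determines both `j` and the cyclic position of the block `x y^e`; the second
because consecutive letters `x` of `r_i` are at most `(i+1)²` apart.
-/

namespace SmallCancel

section Words

variable {S : Type}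

theorem wInv_append (u v : Word S) : wInv (u ++ v) = wInv v ++ wInv u := by
  simp [wInv]

theorem wInv_involutive : Function.Involutive (wInv (S := S)) := by
  intro w
  simp [wInv, List.map_reverse, Function.comp_def]

theorem length_wInv (w : Word S) : (wInv w).length = w.length := by
  simp [wInv]

theorem mem_wInv {a : S × Bool} {w : Word S} : a ∈ wInv w ↔ (a.1, !a.2) ∈ w := by
  constructor
  · simp only [wInv, List.mem_reverse, List.mem_map]
    rintro ⟨b, hb, rfl⟩
    simpa using hb
  · intro h
    simp only [wInv, List.mem_reverse, List.mem_map]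
    exact ⟨_, h, by simp⟩

theorem wInv_rotate (w : Word S) (n : ℕ) :
    wInv (w.rotate n) = (wInv w).rotate (w.length - n % w.length) := by
  rw [wInv, List.map_rotate, List.reverse_rotate, List.length_map, wInv]

theorem _root_.List.IsInfix.wInv {u w : Word S} (h : u <:+: w) : wInv u <:+: wInv w := by
  obtain ⟨a, b, rfl⟩ := h
  exact ⟨SmallCancel.wInv b, SmallCancel.wInv a, by simp only [wInv_append, List.append_assoc]⟩

theorem prefix_rotate_of_append_prefix {α : Type*} {a u r : List α} (h : a ++ u <+: r) :
    u <+: r.rotate a.length := by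
  obtain ⟨c, rfl⟩ := h
  rw [List.append_assoc, List.rotate_append_length_eq, List.append_assoc]
  exact List.prefix_append _ _

theorem exists_prefix_rotate_of_infix {α : Type*} {u w : List α} (h : u <:+: w) :
    ∃ n, u <+: w.rotate n := by
  obtain ⟨a, b, rfl⟩ := h
  exact ⟨a.length, prefix_rotate_of_append_prefix (List.prefix_append _ _)⟩

theorem drop_prefix_rotate {α : Type*} {l : List α} {n : ℕ} (h : n ≤ l.length) :
    l.drop n <+: l.rotate n := by
  rw [List.rotate_eq_drop_append_take h]
  exact List.prefix_append _ _

variable {R : Set (Word S)} {r : Word S}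

theorem rotate_mem_cyclicClosure (hr : r ∈ cyclicClosure R) (n : ℕ) :
    r.rotate n ∈ cyclicClosure R := by
  obtain ⟨r₀, hr₀, m, rfl | rfl⟩ := hr
  · exact ⟨r₀, hr₀, m + n, .inl (List.rotate_rotate _ _ _)⟩
  · exact ⟨r₀, hr₀, m + n, .inr (List.rotate_rotate _ _ _)⟩

theorem wInv_mem_cyclicClosure (hr : r ∈ cyclicClosure R) : wInv r ∈ cyclicClosure R := by
  obtain ⟨r₀, hr₀, m, rfl | rfl⟩ := hr
  · exact ⟨r₀, hr₀, _, .inr (wInv_rotate _ _)⟩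
  · exact ⟨r₀, hr₀, _, .inl (by rw [wInv_rotate, wInv_involutive])⟩

theorem IsPiece.of_infix {p u : Word S} (hp : IsPiece R p) (hu : u <:+: p) : IsPiece R u := by
  obtain ⟨r₁, hr₁, r₂, hr₂, hne, h₁, h₂⟩ := hp
  obtain ⟨a, b, rfl⟩ := hu
  exact ⟨r₁.rotate a.length, rotate_mem_cyclicClosure hr₁ _,
    r₂.rotate a.length, rotate_mem_cyclicClosure hr₂ _,
    fun h => hne (List.rotate_eq_rotate.mp h),
    prefix_rotate_of_append_prefix ((List.prefix_append _ _).trans h₁),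
    prefix_rotate_of_append_prefix ((List.prefix_append _ _).trans h₂)⟩

theorem IsPiece.wInv {p : Word S} (hp : IsPiece R p) : IsPiece R (wInv p) := by
  obtain ⟨_, hr₁, _, hr₂, hne, ⟨c₁, rfl⟩, ⟨c₂, rfl⟩⟩ := hp
  refine ⟨(SmallCancel.wInv (p ++ c₁)).rotate (SmallCancel.wInv c₁).length,
    rotate_mem_cyclicClosure (wInv_mem_cyclicClosure hr₁) _,
    (SmallCancel.wInv (p ++ c₂)).rotate (SmallCancel.wInv c₂).length,
    rotate_mem_cyclicClosure (wInv_mem_cyclicClosure hr₂) _, ?_, ?_, ?_⟩ <;>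
    simp only [wInv_append, List.rotate_append_length_eq]
  · intro h
    exact hne (by rw [wInv_involutive.injective (List.append_cancel_left h)])
  · exact List.prefix_append _ _
  · exact List.prefix_append _ _

end Words

def xyx (e : ℕ) : Word XY := xLetter ++ yPow e ++ xLetter

theorem eq_of_xyx_append_eq {a b : ℕ} {l₁ l₂ : Word XY}
    (h : xyx a ++ l₁ = xyx b ++ l₂) : a = b := by
  simp only [xyx, xLetter, yPow, List.cons_append, List.cons.injEq,
    true_and, List.append_assoc] at h
  induction a generalizing b with
  | zero => cases b <;> simp_all [List.replicate_succ]
  | succ a ih => cases b <;> simp_all [List.replicate_succ]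

theorem eq_of_xyx_prefix {a b : ℕ} {l : Word XY} (ha : xyx a <+: l) (hb : xyx b <+: l) :
    a = b := by
  obtain ⟨l₁, rfl⟩ := ha
  obtain ⟨l₂, h⟩ := hb
  exact eq_of_xyx_append_eq h.symm

theorem snd_eq_true_of_mem_rEx {j : ℕ} {a : XY × Bool} (h : a ∈ rEx j) : a.2 = true := by
  simp only [rEx, List.mem_flatten, List.mem_map] at h
  obtain ⟨_, ⟨_, _, rfl⟩, ha⟩ := h
  simp only [xLetter, yPow, List.mem_append, List.mem_singleton, List.mem_replicate] at ha
  rcases ha with rfl | ⟨_, rfl⟩ <;> rfl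

def block (j t : ℕ) : Word XY := xLetter ++ yPow (j ^ 2 + t)

def blockStart (j k : ℕ) : ℕ := ∑ t ∈ Finset.range k, (j ^ 2 + t + 1)

theorem blockStart_succ (j k : ℕ) : blockStart j (k + 1) = blockStart j k + (j ^ 2 + k + 1) :=
  Finset.sum_range_succ _ _

theorem blockStart_mono (j : ℕ) : Monotone (blockStart j) := fun _ _ h =>
  Finset.sum_le_sum_of_subset (Finset.range_subset_range.mpr h)

theorem rEx_eq_flatten_map_block (j : ℕ) :
    rEx j = ((List.range (2 * j + 1)).map (block j)).flatten :=
  rfl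

theorem length_flatten_map_block (j k : ℕ) :
    ((List.range k).map (block j)).flatten.length = blockStart j k := by
  induction k with
  | zero => rfl
  | succ k ih =>
    simp only [List.range_succ, List.map_append, List.flatten_append, List.length_append, ih,
      blockStart_succ]
    simp [block, xLetter, yPow]

theorem length_rEx (j : ℕ) : (rEx j).length = blockStart j (2 * j + 1) := by
  rw [rEx_eq_flatten_map_block, length_flatten_map_block]

theorem length_rEx_pos (j : ℕ) : 0 < (rEx j).length := by
  rw [length_rEx, blockStart_succ]
  omega

theorem cube_le_length_rEx (j : ℕ) : j ^ 3 ≤ (rEx j).length := by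
  have := Finset.card_nsmul_le_sum (Finset.range (2 * j + 1)) (fun t => j ^ 2 + t + 1)
    (j ^ 2 + 1) (fun t _ => by omega)
  rw [Finset.card_range, smul_eq_mul, ← blockStart] at this
  rw [length_rEx]
  nlinarith

theorem exists_eq_blockStart_add {j K a : ℕ} (ha : a < blockStart j K) :
    ∃ k < K, ∃ u ≤ j ^ 2 + k, a = blockStart j k + u := by
  induction K with
  | zero => simp [blockStart] at ha
  | succ K ih =>
    rw [blockStart_succ] at ha
    by_cases h : a < blockStart j K
    · obtain ⟨k, hk, u, hu, rfl⟩ := ih h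
      exact ⟨k, by omega, u, hu, rfl⟩
    · exact ⟨K, by omega, a - blockStart j K, by omega, by omega⟩

theorem exists_add_mod_eq_blockStart (j n : ℕ) :
    ∃ t ≤ j ^ 2 + 2 * j, ∃ k ≤ 2 * j, (n + t) % (rEx j).length = blockStart j k := by
  have hL := length_rEx j
  have hn : n % (rEx j).length < blockStart j (2 * j + 1) :=
    hL ▸ Nat.mod_lt _ (length_rEx_pos j)
  obtain ⟨k, hk, u, hu, hnu⟩ := exists_eq_blockStart_add hn
  rcases Nat.eq_zero_or_pos u with rfl | hu₀
  · exact ⟨0, by omega, k, by omega, by simpa using hnu⟩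
  refine ⟨j ^ 2 + k + 1 - u, by omega, ?_⟩
  have hnext : n % (rEx j).length + (j ^ 2 + k + 1 - u) = blockStart j (k + 1) := by
    rw [hnu, blockStart_succ]
    omega
  rw [← Nat.mod_add_mod, hnext]
  rcases Nat.lt_or_ge k (2 * j) with hk' | hk'
  · have := blockStart_mono j (show k + 1 + 1 ≤ 2 * j + 1 by omega)
    have := blockStart_succ j (k + 1)
    exact ⟨k + 1, by omega, Nat.mod_eq_of_lt (by omega)⟩
  · exact ⟨0, by omega, by rw [show k + 1 = 2 * j + 1 by omega, ← hL, Nat.mod_self]; rfl⟩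

theorem exists_flatten_map_block_eq {j : ℕ} {l : List ℕ} (hl : l ≠ []) :
    ∃ rest, (l.map (block j)).flatten = xLetter ++ rest := by
  obtain ⟨t, l, rfl⟩ := List.exists_cons_of_ne_nil hl
  exact ⟨yPow (j ^ 2 + t) ++ (l.map (block j)).flatten, by simp [block]⟩

theorem rotate_rEx_blockStart {j k : ℕ} (hj : 0 < j) (hk : k ≤ 2 * j) :
    ∃ rest, (rEx j).rotate (blockStart j k) = xyx (j ^ 2 + k) ++ rest := by
  obtain ⟨M, hM, hMlen⟩ : ∃ M, List.range (2 * j + 1) = List.range k ++ k :: M ∧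
      M.length = 2 * j - k := by
    refine ⟨(List.range (2 * j - k)).map (k + 1 + ·), ?_, by simp⟩
    rw [show 2 * j + 1 = k + (2 * j - k + 1) by omega, List.range_add, List.range_succ_eq_map]
    simp [Function.comp_def, Nat.add_assoc, Nat.add_comm 1]
  obtain ⟨rest, hrest⟩ := exists_flatten_map_block_eq (j := j) (l := M ++ List.range k)
    (by rw [← List.length_pos_iff]; simp; omega)
  refine ⟨rest, ?_⟩
  rw [← length_flatten_map_block j k, rEx_eq_flatten_map_block, hM]
  simp only [List.map_append, List.flatten_append, List.map_cons, List.flatten_cons] at hrest ⊢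
  rw [List.rotate_append_length_eq, List.append_assoc, hrest]
  simp only [block, xyx, List.append_assoc]

theorem getElem?_rotate_rEx_blockStart_add {j k u : ℕ} (hj : 0 < j) (hk : k ≤ 2 * j)
    (hu₀ : 0 < u) (hu : u ≤ j ^ 2 + k) :
    ((rEx j).rotate (blockStart j k + u))[0]? = some (true, true) := by
  obtain ⟨rest, hrest⟩ := rotate_rEx_blockStart hj hk
  obtain ⟨v, rfl⟩ : ∃ v, u = v + 1 := ⟨u - 1, by omega⟩
  have hlen : (xyx (j ^ 2 + k) ++ rest).length = j ^ 2 + k + 2 + rest.length := by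
    simp [xyx, xLetter, yPow]
    omega
  rw [← List.rotate_rotate, hrest, List.getElem?_rotate (by omega), Nat.zero_add,
    Nat.mod_eq_of_lt (by omega)]
  simp only [xyx, xLetter, yPow, List.append_assoc, List.cons_append, List.nil_append,
    List.getElem?_cons_succ]
  rw [List.getElem?_append_left (by simp; omega), List.getElem?_replicate_of_lt (by omega)]

theorem exists_blockStart_of_xyx_prefix_rotate {j e n : ℕ} (hj : 0 < j)
    (h : xyx e <+: (rEx j).rotate n) :
    ∃ k ≤ 2 * j, e = j ^ 2 + k ∧ n % (rEx j).length = blockStart j k := by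
  have hn : n % (rEx j).length < blockStart j (2 * j + 1) :=
    length_rEx j ▸ Nat.mod_lt _ (length_rEx_pos j)
  obtain ⟨k, hk, u, hu, hnu⟩ := exists_eq_blockStart_add hn
  rw [← List.rotate_mod, hnu] at h
  rcases Nat.eq_zero_or_pos u with rfl | hu₀
  · obtain ⟨rest, hrest⟩ := rotate_rEx_blockStart hj (k := k) (by omega)
    rw [Nat.add_zero, hrest] at h
    exact ⟨k, by omega, eq_of_xyx_prefix h (List.prefix_append _ _), hnu⟩
  · obtain ⟨c, hc⟩ := h
    have := getElem?_rotate_rEx_blockStart_add hj (by omega) hu₀ hu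
    simp [← hc, xyx, xLetter] at this

theorem exists_xyx_infix_of_infix_rotate_rEx {i n : ℕ} {p : Word XY} (hi : 0 < i)
    (hp : p <:+: (rEx i).rotate n) (hlen : 2 * (i + 1) ^ 2 ≤ p.length) :
    ∃ e, xyx e <:+: p := by
  obtain ⟨m, hm⟩ := exists_prefix_rotate_of_infix hp
  rw [List.rotate_rotate] at hm
  obtain ⟨t, ht, k, hk, hmod⟩ := exists_add_mod_eq_blockStart i (n + m)
  obtain ⟨rest, hrest⟩ := rotate_rEx_blockStart hi hk
  have hdrop : p.drop t <+: (rEx i).rotate (n + m + t) := by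
    have := hm.length_le
    rw [← List.rotate_rotate]
    exact (hm.drop t).trans (drop_prefix_rotate (by nlinarith))
  have hxyx : xyx (i ^ 2 + k) <+: (rEx i).rotate (n + m + t) := by
    rw [← List.rotate_mod, hmod, hrest]
    exact List.prefix_append _ _
  have hshort : (xyx (i ^ 2 + k)).length ≤ (p.drop t).length := by
    simp only [xyx, xLetter, yPow, List.length_append, List.length_singleton,
      List.length_replicate, List.length_drop]
    have : (i + 1) ^ 2 = i ^ 2 + 2 * i + 1 := by ring
    omega
  exact ⟨i ^ 2 + k, (List.prefix_of_prefix_length_le hxyx hdrop hshort).isInfix.trans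
    (List.drop_suffix t p).isInfix⟩

theorem exists_eq_rotate_rEx_of_xyx_prefix {e : ℕ} {r : Word XY} (hr : r ∈ cyclicClosure REx)
    (h : xyx e <+: r) : ∃ j, 14 ≤ j ∧ ∃ n, r = (rEx j).rotate n := by
  obtain ⟨_, ⟨j, hj, rfl⟩, n, rfl | rfl⟩ := hr
  · exact ⟨j, hj, n, rfl⟩
  · have hx : (false, true) ∈ wInv (rEx j) :=
      List.mem_rotate.mp (h.subset (by simp [xyx, xLetter]))
    simpa using snd_eq_true_of_mem_rEx (mem_wInv.mp hx)

theorem not_isPiece_xyx (e : ℕ) : ¬ IsPiece REx (xyx e) := by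
  rintro ⟨r₁, hr₁, r₂, hr₂, hne, h₁, h₂⟩
  obtain ⟨j₁, hj₁, n₁, rfl⟩ := exists_eq_rotate_rEx_of_xyx_prefix hr₁ h₁
  obtain ⟨j₂, hj₂, n₂, rfl⟩ := exists_eq_rotate_rEx_of_xyx_prefix hr₂ h₂
  obtain ⟨k₁, hk₁, he₁, hn₁⟩ := exists_blockStart_of_xyx_prefix_rotate (by omega) h₁
  obtain ⟨k₂, hk₂, he₂, hn₂⟩ := exists_blockStart_of_xyx_prefix_rotate (by omega) h₂
  have hj : j₁ = j₂ := by
    rw [← Nat.sqrt_add_eq' j₁ (show k₁ ≤ j₁ + j₁ by omega), ← he₁, he₂,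
      Nat.sqrt_add_eq' j₂ (by omega)]
  subst hj
  exact hne (by rw [← List.rotate_mod, hn₁, show k₁ = k₂ by omega, ← hn₂, List.rotate_mod])

end SmallCancel

/-- Example 3.12 of the paper, first part. For every `i ≥ 14`,
the relator `r_i = ∏_{j=0}^{2i} x y^{i²+j}` satisfies `|r_i| ≥ i³`, and every
piece (with respect to `R = {r_i : i ≥ 14}`) that is a subword of some cyclic
shift of `r_i` or of `r_i⁻¹` has length strictly less than `2(i+1)²`. -/
theorem example_piece_bound :
    ∀ i, 14 ≤ i →
      i ^ 3 ≤ (rEx i).length ∧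
      ∀ p s, IsPiece REx p → s ∈ cyclicClosure {rEx i} → p <:+: s →
        p.length < 2 * (i + 1) ^ 2 := by
  intro i hi
  have short_of_infix_rotate : ∀ p n, IsPiece REx p → p <:+: (rEx i).rotate n →
      p.length < 2 * (i + 1) ^ 2 := by
    intro p n hp hpn
    by_contra! hlong
    obtain ⟨e, he⟩ := exists_xyx_infix_of_infix_rotate_rEx (by omega) hpn hlong
    exact not_isPiece_xyx e (hp.of_infix he)
  refine ⟨cube_le_length_rEx i, ?_⟩
  rintro p s hp ⟨r, rfl, n, rfl | rfl⟩ hps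
  · exact short_of_infix_rotate p n hp hps
  · have hinv := hps.wInv
    rw [wInv_rotate, wInv_involutive] at hinv
    simpa [length_wInv] using short_of_infix_rotate _ _ hp.wInv hinv
end

section
/- In the Section-4 construction, for all integers 1 ≤ k′ < k and all i ∈ {1,2,3}, the relator r_i^k can be written as a concatenation r_i^k = ∏_{j=1}^m y_{(i_j,l_j)}^{k′} for some integer m ≥ 2 and indices (i_j, l_j) such that: (1) i_1 ≠ i_2 and i_{m−1} ≠ i_m; and (2) whenever i_j = i_{j+1}, one has i_{j−1} ≠ i_j and i_{j+2} ≠ i_{j+1}. -/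
namespace SmallCancel

/-- A word `w` of length `n` (with letters in `S`) is non-periodic if the `2n` words
obtained as cyclic shifts of `w` and of `w⁻¹` are pairwise distinct. -/
def NonPeriodic {S : Type} (w : Word S) : Prop :=
  Function.Injective fun p : Fin w.length × Bool =>
    if p.2 then w.rotate p.1 else (wInv w).rotate p.1

/-- The data of the Section-4 construction: an integer `N ≥ 28`, a positive multiple
`L` of `N`, and three distinct non-periodic positive words `r_1¹, r_2¹, r_3¹` of
length `L` over `S` (indexed by `ZMod 3`, with the paper's index `i ∈ {1,2,3}` taken
modulo 3) satisfying the `C'(1/(4N))` small-cancellation condition, each given as the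
concatenation of `N` blocks `y_(i,l)¹` of length `L/N`. -/
structure Section4Data (S : Type) where
  /-- the parameter `N ≥ 28` -/
  N : ℕ
  hN : 28 ≤ N
  /-- the length `L`, a positive multiple of `N` -/
  L : ℕ
  hdvd : N ∣ L
  hLpos : 0 < L
  /-- the blocks `y_(i,l)¹`, so that `r_i¹ = y_(i,1)¹ ⋯ y_(i,N)¹` -/
  y1 : ZMod 3 → Fin N → Word S
  hlen : ∀ i l, (y1 i l).length = L / N
  /-- the level-1 relators use only letters of `S` (no inverse letters) -/
  hletters : ∀ i l, ∀ a ∈ y1 i l, a.2 = true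
  /-- the three level-1 relators are pairwise distinct -/
  hdistinct : Function.Injective fun i : ZMod 3 => (List.ofFn fun l => y1 i l).flatten
  /-- the three level-1 relators are non-periodic -/
  hnonper : ∀ i : ZMod 3, NonPeriodic ((List.ofFn fun l => y1 i l).flatten)
  /-- the level-1 relators satisfy the `C'(1/(4N))` condition -/
  hsc : SmallCancellation
    {w | ∃ i : ZMod 3, w = (List.ofFn fun l => y1 i l).flatten} (1 / (4 * N))

namespace Section4Data

variable {S : Type}

/-- The words `y_(i,l)^k` of the Section-4 construction, defined for levels `k ≥ 1`
by `y_(i,l)^{k+1} = ∏_{j=1}^{N} (y_(i,j)^k · y_(i+1,l)^k)` (the value at `k = 0` is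
irrelevant and set to `y1`). -/
def y (D : Section4Data S) : ℕ → ZMod 3 → Fin D.N → Word S
  | 0 => D.y1
  | 1 => D.y1
  | (k + 2) => fun i l =>
      (List.ofFn fun j : Fin D.N => D.y (k + 1) i j ++ D.y (k + 1) (i + 1) l).flatten

/-- The relators `r_i^k = ∏_{j=1}^{N} y_(i,j)^k` (for `k = 1` this agrees with the
given level-1 relators). -/
def r (D : Section4Data S) (k : ℕ) (i : ZMod 3) : Word S :=
  (List.ofFn fun j : Fin D.N => D.y k i j).flatten

/-- The set of relators `R = {r_i^k : 1 ≤ i ≤ 3, k ≥ 1}` of the Section-4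
construction. -/
def R (D : Section4Data S) : Set (Word S) :=
  {w | ∃ k, 1 ≤ k ∧ ∃ i : ZMod 3, w = D.r k i}

end Section4Data

end SmallCancel

open SmallCancel Section4Data

/-!
Unfolding the recursion `k - k'` times writes `y^k_{(i,l)}` as a product of level-`k'` blocks.
Their first indices read `i, i+1, i, i+1, …, i, i+1` when `k = k' + 1`, and one level higher
they form a concatenation of such patterns. The property "no index occurs three times in a row,
and the first two and the last two indices differ" survives concatenation, because a triple
across a junction would need two equal indices at the end of one piece or at the start of the
next.
-/

namespace List

variable {α : Type*}

theorem infix_append_of_triple_infix {a b c : α} {τ₁ τ₂ : List α}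
    (h : [a, b, c] <:+: τ₁ ++ τ₂) :
    [a, b, c] <:+: τ₁ ∨ [a, b, c] <:+: τ₂ ∨ [a, b] <:+ τ₁ ∨ [b, c] <+: τ₂ := by
  obtain ⟨s, t, h⟩ := h
  rw [append_assoc, append_eq_append_iff] at h
  rcases h with ⟨u, rfl, hu⟩ | ⟨u, rfl, rfl⟩
  · rcases u with _ | ⟨x, _ | ⟨y, _ | ⟨z, u⟩⟩⟩
    · exact Or.inr (Or.inl ⟨[], t, by simpa using hu⟩)
    · simp only [cons_append, nil_append, cons.injEq] at hu
      exact Or.inr (Or.inr (Or.inr ⟨t, hu.2⟩))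
    · simp only [cons_append, nil_append, cons.injEq] at hu
      obtain ⟨rfl, rfl, -⟩ := hu
      exact Or.inr (Or.inr (Or.inl ⟨s, rfl⟩))
    · simp only [cons_append, nil_append, cons.injEq] at hu
      obtain ⟨rfl, rfl, rfl, -⟩ := hu
      exact Or.inl ⟨s, u, by simp⟩
  · exact Or.inr (Or.inl ⟨u, t, by simp⟩)

theorem map_range_length_getD {β : Type*} (τ : List α) (d : α) (f : α → β) :
    (range τ.length).map (fun j => f (τ.getD j d)) = τ.map f :=
  ext_getElem (by simp) fun j _ hj => by simp [getElem?_eq_getElem (by simpa using hj)]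

theorem getD_cons_drop_succ {τ : List α} (d : α) {j : ℕ} (hj : j < τ.length) :
    τ.getD j d :: τ.drop (j + 1) = τ.drop j := by
  rw [getD_eq_getElem τ d hj, drop_eq_getElem_cons hj]

theorem getD_cons_getD_cons_drop {τ : List α} (d : α) {j : ℕ} (hj : j + 1 < τ.length) :
    τ.getD j d :: τ.getD (j + 1) d :: τ.drop (j + 2) = τ.drop j := by
  rw [getD_cons_drop_succ d hj, getD_cons_drop_succ d (by omega)]

/-- The letters of `τ` come in runs of length one or two, the first and the last run having
length one, and there are at least two runs. -/
structure ShortRuns (τ : List α) : Prop where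
  two_le_length : 2 ≤ τ.length
  not_pair_prefix : ∀ a, ¬ [a, a] <+: τ
  not_pair_suffix : ∀ a, ¬ [a, a] <:+ τ
  not_triple_infix : ∀ a, ¬ [a, a, a] <:+: τ

theorem shortRuns_pair {a b : α} (h : a ≠ b) : ShortRuns [a, b] where
  two_le_length := by simp
  not_pair_prefix x hx := by
    obtain ⟨rfl, rfl⟩ : x = a ∧ x = b := by simpa using hx.eq_of_length rfl
    exact h rfl
  not_pair_suffix x hx := by
    obtain ⟨rfl, rfl⟩ : x = a ∧ x = b := by simpa using hx.eq_of_length rfl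
    exact h rfl
  not_triple_infix x hx := by simpa using hx.length_le

namespace ShortRuns

variable {τ τ₁ τ₂ : List α}

theorem append (h₁ : ShortRuns τ₁) (h₂ : ShortRuns τ₂) : ShortRuns (τ₁ ++ τ₂) where
  two_le_length := by simpa using le_add_right h₁.two_le_length
  not_pair_prefix a ha := h₁.not_pair_prefix a <|
    prefix_of_prefix_length_le ha (prefix_append _ _) (by simpa using h₁.two_le_length)
  not_pair_suffix a ha := h₂.not_pair_suffix a <|
    suffix_of_suffix_length_le ha (suffix_append _ _) (by simpa using h₂.two_le_length)
  not_triple_infix a ha := by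
    rcases infix_append_of_triple_infix ha with h | h | h | h
    exacts [h₁.not_triple_infix a h, h₂.not_triple_infix a h, h₁.not_pair_suffix a h,
      h₂.not_pair_prefix a h]

theorem flatten {L : List (List α)} (hL : L ≠ []) (h : ∀ τ ∈ L, ShortRuns τ) :
    ShortRuns L.flatten := by
  induction L with
  | nil => exact absurd rfl hL
  | cons τ L ih =>
    rw [flatten_cons]
    rcases eq_or_ne L [] with rfl | hL'
    · simpa using h τ mem_cons_self
    · exact (h τ mem_cons_self).append (ih hL' fun σ hσ => h σ (mem_cons_of_mem τ hσ))

theorem flatten_ofFn {n : ℕ} {f : Fin n → List α} (hn : 0 < n) (h : ∀ j, ShortRuns (f j)) :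
    ShortRuns (ofFn f).flatten :=
  flatten (by simpa using hn.ne') (by simpa [mem_ofFn] using h)

theorem getD_zero_ne_getD_one (h : ShortRuns τ) (d : α) : τ.getD 0 d ≠ τ.getD 1 d := by
  intro heq
  refine h.not_pair_prefix (τ.getD 0 d) ⟨τ.drop 2, ?_⟩
  have hdrop := getD_cons_getD_cons_drop d (j := 0) h.two_le_length
  rwa [zero_add, zero_add, ← heq, drop_zero] at hdrop

theorem getD_sub_two_ne_getD_sub_one (h : ShortRuns τ) (d : α) :
    τ.getD (τ.length - 2) d ≠ τ.getD (τ.length - 1) d := by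
  have hlen := h.two_le_length
  intro heq
  refine h.not_pair_suffix (τ.getD (τ.length - 2) d) ⟨τ.take (τ.length - 2), ?_⟩
  have hdrop := getD_cons_getD_cons_drop (τ := τ) d (j := τ.length - 2) (by omega)
  rw [show τ.length - 2 + 1 = τ.length - 1 by omega, ← heq,
    show τ.length - 2 + 2 = τ.length by omega, drop_length] at hdrop
  rw [hdrop, take_append_drop]

theorem not_triple_getD (h : ShortRuns τ) (d : α) {j : ℕ} (hj : j + 2 < τ.length)
    (h₁ : τ.getD j d = τ.getD (j + 1) d) (h₂ : τ.getD (j + 1) d = τ.getD (j + 2) d) : False := by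
  refine h.not_triple_infix (τ.getD j d) ⟨τ.take j, τ.drop (j + 3), ?_⟩
  have hdrop := getD_cons_drop_succ (τ := τ) d (j := j) (by omega)
  have hdrop' := getD_cons_getD_cons_drop (τ := τ) d (j := j + 1) hj
  rw [show j + 1 + 1 = j + 2 by omega, show j + 1 + 2 = j + 3 by omega, ← h₂, ← h₁] at hdrop'
  rw [← hdrop'] at hdrop
  rw [append_assoc]
  exact (congrArg (take j τ ++ ·) hdrop).trans (take_append_drop j τ)

theorem getD_ne_of_getD_eq_getD_succ (h : ShortRuns τ) (d : α) {j : ℕ}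
    (hj : j + 1 < τ.length) (heq : τ.getD j d = τ.getD (j + 1) d) :
    (1 ≤ j → τ.getD (j - 1) d ≠ τ.getD j d) ∧
      (j + 2 < τ.length → τ.getD (j + 2) d ≠ τ.getD (j + 1) d) := by
  refine ⟨fun hj₁ hprev => ?_, fun hj₂ hnext => h.not_triple_getD d hj₂ heq hnext.symm⟩
  obtain ⟨j, rfl⟩ := Nat.exists_eq_add_of_le' hj₁
  rw [Nat.add_sub_cancel] at hprev
  exact h.not_triple_getD d hj hprev heq

end ShortRuns

end List

namespace SmallCancel.Section4Data

open List

/-- `blocks N d i l` lists the indices `(i_j, l_j)` with `y^{k+d}_{(i,l)} = ∏_j y^k_{(i_j,l_j)}`. -/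
def blocks (N : ℕ) : ℕ → ZMod 3 → Fin N → List (ZMod 3 × Fin N)
  | 0, i, l => [(i, l)]
  | d + 1, i, l => (ofFn fun j : Fin N => blocks N d i j ++ blocks N d (i + 1) l).flatten

theorem shortRuns_map_fst_blocks {N : ℕ} (hN : 0 < N) (d : ℕ) (i : ZMod 3) (l : Fin N) :
    ShortRuns ((blocks N (d + 1) i l).map Prod.fst) := by
  induction d generalizing i l with
  | zero =>
    simpa [blocks, map_flatten, map_ofFn, Function.comp_def] using
      ShortRuns.flatten_ofFn hN fun _ => shortRuns_pair (a := i) (b := i + 1) (by decide +revert)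
  | succ d ih =>
    rw [blocks, map_flatten, map_ofFn]
    exact ShortRuns.flatten_ofFn hN fun j => by
      simpa only [Function.comp_apply, map_append] using (ih i j).append (ih (i + 1) l)

variable {S : Type} (D : Section4Data S)

theorem y_succ {k : ℕ} (hk : 1 ≤ k) (i : ZMod 3) (l : Fin D.N) :
    D.y (k + 1) i l = (ofFn fun j => D.y k i j ++ D.y k (i + 1) l).flatten := by
  obtain ⟨k, rfl⟩ := Nat.exists_eq_add_of_le' hk
  rfl

theorem y_add {k : ℕ} (hk : 1 ≤ k) (d : ℕ) (i : ZMod 3) (l : Fin D.N) :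
    D.y (k + d) i l = ((blocks D.N d i l).map fun p => D.y k p.1 p.2).flatten := by
  induction d generalizing i l with
  | zero => simp [blocks]
  | succ d ih =>
    rw [← add_assoc, D.y_succ (by omega)]
    simp [blocks, ih, map_flatten, flatten_flatten, map_ofFn, Function.comp_def]

theorem r_add {k : ℕ} (hk : 1 ≤ k) (d : ℕ) (i : ZMod 3) :
    D.r (k + d) i =
      (((ofFn fun j => blocks D.N d i j).flatten).map fun p => D.y k p.1 p.2).flatten := by
  simp [r, D.y_add hk, map_flatten, flatten_flatten, map_ofFn, Function.comp_def]

end SmallCancel.Section4Data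

-- The indices `j` below are 0-based: `idx 0, idx 1, …` are the paper's `(i_1, l_1), (i_2, l_2), …`.
/-- Lemma 4.4 of the paper. In the Section-4 construction, for all
`1 ≤ k′ < k` and all `i`, the relator `r_i^k` can be written as a concatenation
`∏_{j=1}^m y_(i_j,l_j)^{k′}` with `m ≥ 2` such that (1) `i_1 ≠ i_2` and
`i_{m-1} ≠ i_m`, and (2) whenever `i_j = i_{j+1}`, the neighbouring indices satisfy
`i_{j-1} ≠ i_j` and `i_{j+2} ≠ i_{j+1}`. (Indices are 0-based here.) -/
theorem section4_r_decomposition {S : Type} (D : Section4Data S) :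
    ∀ k' k : ℕ, 1 ≤ k' → k' < k → ∀ i : ZMod 3,
      ∃ m, 2 ≤ m ∧ ∃ idx : ℕ → ZMod 3 × Fin D.N,
        D.r k i =
          ((List.range m).map fun j => D.y k' (idx j).1 (idx j).2).flatten ∧
        ((idx 0).1 ≠ (idx 1).1 ∧ (idx (m - 2)).1 ≠ (idx (m - 1)).1) ∧
        (∀ j, j + 1 < m → (idx j).1 = (idx (j + 1)).1 →
          (1 ≤ j → (idx (j - 1)).1 ≠ (idx j).1) ∧
          (j + 2 < m → (idx (j + 2)).1 ≠ (idx (j + 1)).1)) := by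
  intro k' k hk' hk i
  obtain ⟨d, rfl⟩ : ∃ d, k = k' + (d + 1) := ⟨k - k' - 1, by omega⟩
  have hN : 0 < D.N := by linarith [D.hN]
  set σ := (List.ofFn fun j => blocks D.N (d + 1) i j).flatten
  have hσ : (σ.map Prod.fst).ShortRuns := by
    simpa [σ, List.map_flatten, List.map_ofFn, Function.comp_def] using
      List.ShortRuns.flatten_ofFn hN fun j => shortRuns_map_fst_blocks hN d i j
  let p₀ : ZMod 3 × Fin D.N := (0, ⟨0, hN⟩)
  have hfst (j : ℕ) : (σ.getD j p₀).1 = (σ.map Prod.fst).getD j 0 := (List.getD_map ..).symm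
  have hlen : (σ.map Prod.fst).length = σ.length := List.length_map _
  refine ⟨σ.length, hlen ▸ hσ.two_le_length, (σ.getD · p₀), ?_, ?_, fun j hj heq => ?_⟩
  · rw [D.r_add hk']
    exact congrArg List.flatten (List.map_range_length_getD σ p₀ _).symm
  · simp only [hfst, ← hlen]
    exact ⟨hσ.getD_zero_ne_getD_one 0, hσ.getD_sub_two_ne_getD_sub_one 0⟩
  · simp only [hfst, ← hlen] at hj heq ⊢
    exact hσ.getD_ne_of_getD_eq_getD_succ 0 hj heq
end
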